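/- If M = (P, a) ∈ ℳ(S, a) is a substochastic DTMC with S₁ ⊆ S₂ ⊆ S, then the interior of S₂ in M equals the interior of S₂ in M − S₁: (S₂)₀^M = (S₂)₀^{M−S₁}, where for K ⊆ S, K₀^M := {s ∈ K∖{a} | P((S∖K)s) = 0}. Moreover, (S₁)₀^M ⊆ (S₂)₀^M. -/

import Mathlib

open scoped ENNReal

namespace PA

variable {α : Type*}

/-- Block contraction auxiliary: `prev` records whether the previous letter was in `K`
(i.e., we are inside a `K`-block whose first letter was already kept). -/
def contractAux [DecidableEq α] (K : Finset α) : Bool → List α → List α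
  | _, [] => []
  | prev, a :: x =>
    if a ∈ K then
      (if prev then contractAux K true x else a :: contractAux K true x)
    else a :: contractAux K false x

/-- `contract K x` is `x − K`: every maximal nonempty factor of `x` consisting of
letters of `K` is replaced by its first letter. -/
def contract [DecidableEq α] (K : Finset α) (x : List α) : List α :=
  contractAux K false x

/-- `preim K x` is `x + K`, the preimage of `x` under `contract K`. -/
def preim [DecidableEq α] (K : Finset α) (x : List α) : Set (List α) :=
  {x' | contract K x' = x}

/-- `minPref L` is `L^≤`: the prefix-minimal elements of `L`. -/
def minPref (L : Set (List α)) : Set (List α) :=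
  {x ∈ L | ∀ x', x' <+: x → x' ≠ x → x' ∉ L}

/-- Fusion concatenation: for `u` ending in `a` and `v` starting with `a`,
`fuse u v` is `u ++ v` with one copy of the shared letter removed. -/
def fuse (u v : List α) : List α := u ++ v.tail

/-- Elementwise fusion of sets of words. -/
def setFuse (X Y : Set (List α)) : Set (List α) :=
  {z | ∃ u ∈ X, ∃ v ∈ Y, z = fuse u v}

/-- Probability mass of a set of words: sum of `P` over the prefix-minimal elements. -/
noncomputable def setP (P : List α → ℝ≥0∞) (R : Set (List α)) : ℝ≥0∞ :=
  ∑' x : minPref R, P x.1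

/-- `P ∈ 𝒯(S)`: substochastic transition probability function on `S⁺`. -/
def IsTPF [Fintype α] (P : List α → ℝ≥0∞) : Prop :=
  (∀ x, P x ≤ 1) ∧ (∀ s : α, P [s] = 1) ∧
  (∀ s : α, (∑ t : α, P [s, t]) ≤ 1) ∧
  (∀ (x y : List α) (s : α), P (x ++ s :: y) = P (x ++ [s]) * P (s :: y))

/-- `(K)₀^M`: the interior of `K` in the DTMC `(P, a)`: states of `K` other than `a`
with no incoming transition from outside `K`. -/
def interior [Fintype α] [DecidableEq α] (P : List α → ℝ≥0∞) (a : α) (K : Finset α) :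
    Set α :=
  {s | s ∈ K ∧ s ≠ a ∧ (∑ t ∈ Kᶜ, P [t, s]) = 0}

open Classical in
noncomputable def abstr [Fintype α] [DecidableEq α]
    (P : List α → ℝ≥0∞) (a : α) (K : Finset α) : List α → ℝ≥0∞ :=
  fun x =>
    if x.length = 1 then 1
    else if 2 ≤ x.length ∧ ∃ s ∈ x, s ∈ interior P a K then 0
    else setP P (preim K x)

open Classical in
noncomputable def OutSet [Fintype α] (P : List α → ℝ≥0∞) (S₁ : Finset α) : Finset α :=
  Finset.univ.filter fun t => t ∉ S₁ ∧ 0 < ∑ s ∈ S₁, P [s, t]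

open Classical in
noncomputable def USet [Fintype α] (P : List α → ℝ≥0∞) (S₁ : Finset α) : Finset α :=
  Finset.univ.filter fun r => r ∈ S₁ ∧
    0 < setP P {x | ∃ (w : List α) (t : α),
      x = r :: (w ++ [t]) ∧ (∀ c ∈ w, c ∈ S₁) ∧ t ∈ OutSet P S₁}

open Classical in
noncomputable def U1Set [Fintype α] (P : List α → ℝ≥0∞) (S₁ : Finset α) : Finset α :=
  Finset.univ.filter fun r => r ∈ S₁ ∧ 0 < ∑ t ∈ OutSet P S₁, P [r, t]

end PA

/-!
Only words of length two matter for the interior. If `s` lies in `(S₁)₀^M`, then every two-letter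
word ending in `s` passes through `(S₁)₀^M` and has probability `0` in `M − S₁`, while its
`P`-mass from outside `S₂` already vanishes because `(S₁)₀^M ⊆ (S₂)₀^M`. Otherwise, for `t ∉ S₁`
the word `t s` is the only prefix-minimal word contracting to `t s`, so `M − S₁` assigns it the
probability `P(t s)`.
-/

namespace PA

variable {α : Type*} [DecidableEq α]

lemma length_contractAux_le (K : Finset α) (b : Bool) (x : List α) :
    (contractAux K b x).length ≤ x.length := by
  induction x generalizing b with
  | nil => simp [contractAux]
  | cons c x ih =>
    simp only [contractAux]
    split_ifs
    · exact Nat.le_succ_of_le (ih true)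
    · simpa using ih true
    · simpa using ih false

lemma length_contract_le (K : Finset α) (x : List α) : (contract K x).length ≤ x.length :=
  length_contractAux_le K false x

lemma contract_cons (K : Finset α) (c : α) (x : List α) :
    contract K (c :: x) = c :: contractAux K (decide (c ∈ K)) x := by
  by_cases hc : c ∈ K <;> simp [contract, contractAux, hc]

lemma contract_pair {K : Finset α} {t : α} (ht : t ∉ K) (s : α) : contract K [t, s] = [t, s] := by
  by_cases hs : s ∈ K <;> simp [contract, contractAux, ht, hs]

lemma pair_prefix_of_contract_eq {K : Finset α} {t s : α} (ht : t ∉ K) {x : List α}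
    (hx : contract K x = [t, s]) : [t, s] <+: x := by
  match x, hx with
  | c :: d :: w, hx =>
    rw [contract_cons] at hx
    obtain ⟨rfl, hw⟩ := List.cons_eq_cons.mp hx
    have hd : contract K (d :: w) = [s] := by simpa [contract, ht] using hw
    rw [contract_cons] at hd
    obtain ⟨rfl, -⟩ := List.cons_eq_cons.mp hd
    exact ⟨w, rfl⟩
  | [], hx => simp [contract, contractAux] at hx
  | [c], hx => simp [contract_cons, contractAux] at hx

lemma minPref_preim_pair {K : Finset α} {t : α} (ht : t ∉ K) (s : α) :
    minPref (preim K [t, s]) = {[t, s]} := by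
  have hmem : [t, s] ∈ preim K [t, s] := contract_pair ht s
  ext x
  constructor
  · rintro ⟨hx, hmin⟩
    by_contra hne
    exact hmin [t, s] (pair_prefix_of_contract_eq ht hx) (Ne.symm hne) hmem
  · rintro rfl
    refine ⟨hmem, fun x' hpre hne hx' => hne ?_⟩
    have hlen : 2 ≤ x'.length := by
      simpa [show contract K x' = [t, s] from hx'] using length_contract_le K x'
    exact hpre.eq_of_length (le_antisymm hpre.length_le hlen)

lemma setP_preim_pair (P : List α → ℝ≥0∞) {K : Finset α} {t : α} (ht : t ∉ K) (s : α) :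
    setP P (preim K [t, s]) = P [t, s] := by
  rw [setP, minPref_preim_pair ht, tsum_singleton]

variable [Fintype α]

lemma sum_compl_eq_zero_of_subset {K L : Finset α} (h : K ⊆ L) {f : α → ℝ≥0∞}
    (hf : ∑ t ∈ Kᶜ, f t = 0) : ∑ t ∈ Lᶜ, f t = 0 :=
  nonpos_iff_eq_zero.mp <|
    hf ▸ Finset.sum_le_sum_of_subset (Finset.compl_subset_compl.mpr h)

lemma interior_mono (P : List α → ℝ≥0∞) (a : α) {K L : Finset α} (h : K ⊆ L) :
    interior P a K ⊆ interior P a L :=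
  fun _ ⟨hK, ha, hin⟩ => ⟨h hK, ha, sum_compl_eq_zero_of_subset h hin⟩

lemma abstr_pair_of_mem_interior (P : List α → ℝ≥0∞) {a : α} {K : Finset α} (t : α) {s : α}
    (hs : s ∈ interior P a K) : abstr P a K [t, s] = 0 := by
  simp only [abstr]
  rw [if_neg (by simp), if_pos ⟨by simp, s, by simp, hs⟩]

lemma abstr_pair_of_not_mem (P : List α → ℝ≥0∞) {a : α} {K : Finset α} {t s : α} (ht : t ∉ K)
    (hs : s ∉ interior P a K) : abstr P a K [t, s] = P [t, s] := by
  have hpass : ¬ ∃ c ∈ [t, s], c ∈ interior P a K := by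
    rintro ⟨c, hc, hci⟩
    rcases List.mem_pair.mp hc with rfl | rfl
    exacts [ht hci.1, hs hci]
  simp only [abstr]
  rw [if_neg (by simp), if_neg (fun h => hpass h.2), setP_preim_pair P ht]

lemma sum_compl_abstr_eq_zero_iff (P : List α → ℝ≥0∞) (a : α) {K L : Finset α} (h : K ⊆ L)
    (s : α) : ∑ t ∈ Lᶜ, abstr P a K [t, s] = 0 ↔ ∑ t ∈ Lᶜ, P [t, s] = 0 := by
  by_cases hs : s ∈ interior P a K
  · have hP : ∑ t ∈ Lᶜ, P [t, s] = 0 := sum_compl_eq_zero_of_subset h hs.2.2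
    simp [abstr_pair_of_mem_interior P _ hs, hP]
  · refine Eq.congr_left (Finset.sum_congr rfl fun t ht => abstr_pair_of_not_mem P ?_ hs)
    exact fun htK => Finset.mem_compl.mp ht (h htK)

lemma interior_abstr_eq (P : List α → ℝ≥0∞) (a : α) {K L : Finset α} (h : K ⊆ L) :
    interior (abstr P a K) a L = interior P a L := by
  ext s
  exact and_congr_right fun _ => and_congr_right fun _ => sum_compl_abstr_eq_zero_iff P a h s

end PA

open scoped ENNReal in
theorem interior_abstr_general {α : Type*} [Fintype α] [DecidableEq α]
    (a : α) (S₁ S₂ : Finset α) (h : S₁ ⊆ S₂)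
    (P : List α → ℝ≥0∞) :
    PA.interior (PA.abstr P a S₁) a S₂ = PA.interior P a S₂ ∧
    PA.interior P a S₁ ⊆ PA.interior P a S₂ :=
  ⟨PA.interior_abstr_eq P a h, PA.interior_mono P a h⟩

open scoped ENNReal in
/-- `(S₂)₀^{M−S₁} = (S₂)₀^M` and `(S₁)₀^M ⊆ (S₂)₀^M` for `S₁ ⊆ S₂`. -/
theorem interior_abstr {α : Type*} [Fintype α] [DecidableEq α]
    (a : α) (S₁ S₂ : Finset α) (h : S₁ ⊆ S₂)
    (P : List α → ℝ≥0∞) (hP : PA.IsTPF P) :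
    PA.interior (PA.abstr P a S₁) a S₂ = PA.interior P a S₂ ∧
    PA.interior P a S₁ ⊆ PA.interior P a S₂ :=
  interior_abstr_general a S₁ S₂ h P
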